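/- arXiv:1611.09126 — 10 statements merged into one kernel-verified Lean document; each statement's English description precedes it below -/
import Mathlib

section
/- For $0 < r \le 2$ and positive reals $x_1 \le \cdots \le x_n$ with positive weights $q_i$ summing to $1$, the inequality $M_{n,r} - G_n \le \frac{r}{2 x_1} \sigma_n$ holds, where $x_1 = \min_i x_i$. -/
/-!
Normalise by the arithmetic mean `A`: with `z = x / A` one has `∑ q z = 1`, `M_r = A β^(1/r)` and
`G = A e^L`, where `β = ∑ q z^r` and `L = ∑ q log z`. Then `β^(1/r) - e^L ≤ (β - 1 - r L) / r`:
for `r ≥ 1` by Bernoulli, `β^(1/r) ≤ 1 + (β - 1) / r`, together with `1 + L ≤ e^L`; for `r ≤ 1`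
because `e^(rL) ≤ β ≤ 1` by Jensen and `t ↦ t^(1/r)` is `1/r`-Lipschitz on `[0, 1]`.
The right-hand side is `∑ q g(z) / r` with `g(θ) = θ^r - 1 - r log θ`, and the one-variable bound
`g(θ) ≤ r² (θ - 1)² / (2 min θ 1)` for `0 ≤ r ≤ 2` turns it into `r σ / (2 x_min)`.
-/

open Real Finset Set

lemma monotoneOn_Ici_of_hasDerivAt_nonneg {f f' : ℝ → ℝ} {a : ℝ}
    (hf : ∀ t, a ≤ t → HasDerivAt f (f' t) t) (hf' : ∀ t, a < t → 0 ≤ f' t) :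
    MonotoneOn f (Ici a) := by
  refine monotoneOn_of_hasDerivWithinAt_nonneg (f' := f') (convex_Ici a)
    (fun t ht => (hf t ht).continuousAt.continuousWithinAt) (fun t ht => ?_) (fun t ht => ?_)
  all_goals rw [interior_Ici] at ht
  · exact (hf t (le_of_lt ht)).hasDerivWithinAt
  · exact hf' t ht

lemma exp_neg_le_one_sub_add_sq_div_two {v : ℝ} (hv : 0 ≤ v) :
    exp (-v) ≤ 1 - v + v ^ 2 / 2 := by
  have hderiv (t : ℝ) :
      HasDerivAt (fun t => 1 - t + t ^ 2 / 2 - exp (-t)) (-1 + t + exp (-t)) t := by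
    refine ((((hasDerivAt_id' t).const_sub 1).add ((hasDerivAt_pow 2 t).div_const 2)).sub
      (hasDerivAt_neg t).exp).congr_deriv ?_
    norm_num
  have := monotoneOn_Ici_of_hasDerivAt_nonneg (fun t _ => hderiv t)
    (fun t _ => by linarith [add_one_le_exp (-t)]) self_mem_Ici hv hv
  simp only [neg_zero, exp_zero] at this
  linarith

lemma sq_log_le_sq_sub_one_div {θ : ℝ} (hθ : 0 < θ) : log θ ^ 2 ≤ (θ - 1) ^ 2 / θ := by
  set u := log θ / 2
  have hθu : θ = exp u * exp u := by rw [← exp_add, add_halves, exp_log hθ]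
  have hsinh : (θ - 1) ^ 2 / θ = (2 * sinh u) ^ 2 := by
    rw [sinh_eq, hθu, exp_neg]; field_simp
  rw [hsinh, show log θ = 2 * u by ring]
  rcases le_total 0 u with hu | hu
  · nlinarith [self_le_sinh_iff.mpr hu]
  · nlinarith [sinh_le_self_iff.mpr hu]

lemma rpow_le_one_add_mul_mul_sub_one {r t : ℝ} (hr0 : 0 ≤ r) (hr2 : r ≤ 2) (ht : 1 ≤ t) :
    t ^ r ≤ 1 + r * t * (t - 1) := by
  have hbern := rpow_one_add_le_one_add_mul_self (s := t ^ 2 - 1) (by nlinarith)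
    (div_nonneg hr0 zero_le_two) (by linarith : r / 2 ≤ 1)
  have hpow : (t ^ 2) ^ (r / 2) = t ^ r := by
    rw [← rpow_two, ← rpow_mul (by linarith), mul_div_cancel₀ r two_ne_zero]
  rw [add_sub_cancel, hpow] at hbern
  nlinarith [mul_nonneg hr0 (sq_nonneg (t - 1))]

lemma rpow_sub_one_sub_mul_log_le_of_one_le {r θ : ℝ} (hr0 : 0 ≤ r) (hr2 : r ≤ 2) (hθ : 1 ≤ θ) :
    θ ^ r - 1 - r * log θ ≤ r ^ 2 * (θ - 1) ^ 2 / 2 := by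
  set f : ℝ → ℝ := fun t => r ^ 2 * (t - 1) ^ 2 / 2 - (t ^ r - 1 - r * log t)
  have hderiv (t : ℝ) (ht : 1 ≤ t) :
      HasDerivAt f (r / t * (r * t * (t - 1) - t ^ r + 1)) t := by
    have ht0 : t ≠ 0 := by positivity
    refine ((((hasDerivAt_id' t).sub_const 1).pow 2).const_mul (r ^ 2) |>.div_const 2 |>.sub
      (((hasDerivAt_rpow_const (Or.inl ht0)).sub_const 1).sub
        ((hasDerivAt_log ht0).const_mul r))).congr_deriv ?_
    rw [rpow_sub_one ht0]
    field_simp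
    ring
  have hmono := monotoneOn_Ici_of_hasDerivAt_nonneg hderiv fun t ht => by
    have hbound := rpow_le_one_add_mul_mul_sub_one hr0 hr2 ht.le
    have hrt : 0 ≤ r / t := by positivity
    nlinarith
  have h1θ := hmono self_mem_Ici hθ hθ
  simp only [f, sub_self, one_rpow, log_one] at h1θ
  linarith

lemma rpow_sub_one_sub_mul_log_le_of_le_one {r θ : ℝ} (hr : 0 ≤ r) (hθ0 : 0 < θ) (hθ1 : θ ≤ 1) :
    θ ^ r - 1 - r * log θ ≤ r ^ 2 * (θ - 1) ^ 2 / (2 * θ) := by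
  have hexp := exp_neg_le_one_sub_add_sq_div_two
    (neg_nonneg.mpr (mul_nonpos_of_nonneg_of_nonpos hr (log_nonpos hθ0.le hθ1)))
  rw [neg_neg, mul_comm, ← rpow_def_of_pos hθ0] at hexp
  calc θ ^ r - 1 - r * log θ ≤ r ^ 2 * log θ ^ 2 / 2 := by linarith
    _ ≤ r ^ 2 * ((θ - 1) ^ 2 / θ) / 2 := by gcongr; exact sq_log_le_sq_sub_one_div hθ0
    _ = r ^ 2 * (θ - 1) ^ 2 / (2 * θ) := by field_simp

lemma rpow_sub_one_sub_mul_log_le {r θ μ : ℝ} (hr0 : 0 ≤ r) (hr2 : r ≤ 2) (hμ : 0 < μ)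
    (hμθ : μ ≤ θ) (hμ1 : μ ≤ 1) :
    θ ^ r - 1 - r * log θ ≤ r ^ 2 * (θ - 1) ^ 2 / (2 * μ) := by
  rcases le_total 1 θ with hθ | hθ
  · calc θ ^ r - 1 - r * log θ ≤ r ^ 2 * (θ - 1) ^ 2 / (2 * 1) := by
          simpa using rpow_sub_one_sub_mul_log_le_of_one_le hr0 hr2 hθ
      _ ≤ r ^ 2 * (θ - 1) ^ 2 / (2 * μ) := by gcongr
  · calc θ ^ r - 1 - r * log θ ≤ r ^ 2 * (θ - 1) ^ 2 / (2 * θ) :=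
          rpow_sub_one_sub_mul_log_le_of_le_one hr0 (hμ.trans_le hμθ) hθ
      _ ≤ r ^ 2 * (θ - 1) ^ 2 / (2 * μ) := by gcongr

lemma rpow_sub_rpow_le_mul_sub {p a b : ℝ} (hp : 1 ≤ p) (ha : 0 ≤ a) (hab : a ≤ b) (hb : b ≤ 1) :
    b ^ p - a ^ p ≤ p * (b - a) := by
  rcases hab.eq_or_lt with rfl | hlt
  · simp
  have hb0 : 0 < b := ha.trans_lt hlt
  have hbern := one_add_mul_self_le_rpow_one_add (s := a / b - 1)
    (by linarith [div_nonneg ha hb0.le]) hp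
  rw [add_sub_cancel, div_rpow ha hb0.le, le_div_iff₀ (by positivity)] at hbern
  have hbp : b ^ p ≤ b := by simpa using rpow_le_rpow_of_exponent_ge hb0 hb hp
  have htangent : (1 + p * (a / b - 1)) * b ^ p = b ^ p - p * (b - a) * (b ^ p / b) := by
    field_simp; ring
  have hslope : p * (b - a) * (b ^ p / b) ≤ p * (b - a) :=
    mul_le_of_le_one_right (by nlinarith) ((div_le_one hb0).mpr hbp)
  linarith

section Means

variable {ι : Type*} {s : Finset ι} {w z : ι → ℝ}

lemma prod_rpow_eq_exp_sum_mul_log (hz : ∀ i ∈ s, 0 < z i) :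
    ∏ i ∈ s, z i ^ w i = exp (∑ i ∈ s, w i * log (z i)) := by
  rw [exp_sum]
  refine prod_congr rfl fun i hi => ?_
  rw [rpow_def_of_pos (hz i hi), mul_comm]

lemma rpow_mean_sub_geom_mean_le_of_mean_eq_one (hw : ∀ i ∈ s, 0 ≤ w i) (hw1 : ∑ i ∈ s, w i = 1)
    (hz : ∀ i ∈ s, 0 < z i) (hmean : ∑ i ∈ s, w i * z i = 1) {r : ℝ} (hr : 0 < r) :
    (∑ i ∈ s, w i * z i ^ r) ^ (1 / r) - ∏ i ∈ s, z i ^ w i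
      ≤ (∑ i ∈ s, w i * (z i ^ r - 1 - r * log (z i))) / r := by
  have hsum : ∑ i ∈ s, w i * (z i ^ r - 1 - r * log (z i))
      = ∑ i ∈ s, w i * z i ^ r - 1 - r * ∑ i ∈ s, w i * log (z i) := by
    simp only [mul_sub, sum_sub_distrib, mul_one, hw1, mul_left_comm _ r, ← mul_sum]
  rw [prod_rpow_eq_exp_sum_mul_log hz, hsum]
  set β := ∑ i ∈ s, w i * z i ^ r
  set L := ∑ i ∈ s, w i * log (z i)
  have hβ0 : 0 ≤ β := sum_nonneg fun i hi => mul_nonneg (hw i hi) (rpow_nonneg (hz i hi).le r)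
  rcases le_total 1 r with hr1 | hr1
  · have hbern := rpow_one_add_le_one_add_mul_self (s := β - 1) (by linarith)
      (by positivity : 0 ≤ 1 / r) ((div_le_one hr).mpr hr1)
    rw [add_sub_cancel] at hbern
    have hdiv : (β - 1 - r * L) / r = 1 / r * (β - 1) - L := by field_simp
    linarith [add_one_le_exp L]
  · have hβ1 : β ≤ 1 := by
      have := (concaveOn_rpow hr.le hr1).le_map_sum hw hw1 (fun i hi => (hz i hi).le)
      simpa [smul_eq_mul, hmean] using this
    have hexp : exp (r * L) ≤ β := by
      have := convexOn_exp.map_sum_le hw hw1 (p := fun i => r * log (z i)) (fun _ _ => trivial)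
      have hβ : ∑ i ∈ s, w i * exp (r * log (z i)) = β :=
        sum_congr rfl fun i hi => by rw [rpow_def_of_pos (hz i hi), mul_comm r]
      simpa only [smul_eq_mul, mul_left_comm _ r, ← mul_sum, hβ] using this
    have hlip := rpow_sub_rpow_le_mul_sub ((one_le_div hr).mpr hr1) (exp_pos _).le hexp hβ1
    rw [← exp_mul, mul_one_div, mul_div_cancel_left₀ L hr.ne'] at hlip
    have hdiv : 1 / r * (β - exp (r * L)) ≤ (β - 1 - r * L) / r := by
      rw [one_div_mul_eq_div]
      exact div_le_div_of_nonneg_right (by linarith [add_one_le_exp (r * L)]) hr.le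
    linarith

lemma rpow_mean_sub_geom_mean_le_mul_sum_sq_of_mean_eq_one (hw : ∀ i ∈ s, 0 ≤ w i)
    (hw1 : ∑ i ∈ s, w i = 1) (hmean : ∑ i ∈ s, w i * z i = 1) {μ r : ℝ} (hμ : 0 < μ)
    (hμz : ∀ i ∈ s, μ ≤ z i) (hr0 : 0 < r) (hr2 : r ≤ 2) :
    (∑ i ∈ s, w i * z i ^ r) ^ (1 / r) - ∏ i ∈ s, z i ^ w i
      ≤ r / (2 * μ) * ∑ i ∈ s, w i * (z i - 1) ^ 2 := by
  have hμ1 : μ ≤ 1 := by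
    calc μ = ∑ i ∈ s, w i * μ := by rw [← sum_mul, hw1, one_mul]
      _ ≤ 1 := hmean ▸ sum_le_sum fun i hi => mul_le_mul_of_nonneg_left (hμz i hi) (hw i hi)
  calc _ ≤ (∑ i ∈ s, w i * (z i ^ r - 1 - r * log (z i))) / r :=
        rpow_mean_sub_geom_mean_le_of_mean_eq_one hw hw1 (fun i hi => hμ.trans_le (hμz i hi))
          hmean hr0
    _ ≤ (∑ i ∈ s, w i * (r ^ 2 * (z i - 1) ^ 2 / (2 * μ))) / r := by
        refine div_le_div_of_nonneg_right (sum_le_sum fun i hi => ?_) hr0.le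
        exact mul_le_mul_of_nonneg_left
          (rpow_sub_one_sub_mul_log_le hr0.le hr2 hμ (hμz i hi) hμ1) (hw i hi)
    _ = r / (2 * μ) * ∑ i ∈ s, w i * (z i - 1) ^ 2 := by
        rw [mul_sum, sum_div]
        refine sum_congr rfl fun i _ => ?_
        field_simp

lemma rpow_mean_const_mul (hw : ∀ i ∈ s, 0 ≤ w i) (hz : ∀ i ∈ s, 0 ≤ z i) {c : ℝ} (hc : 0 ≤ c)
    {r : ℝ} (hr : r ≠ 0) :
    (∑ i ∈ s, w i * (c * z i) ^ r) ^ (1 / r) = c * (∑ i ∈ s, w i * z i ^ r) ^ (1 / r) := by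
  have hsum : ∑ i ∈ s, w i * (c * z i) ^ r = c ^ r * ∑ i ∈ s, w i * z i ^ r := by
    rw [mul_sum]
    exact sum_congr rfl fun i hi => by rw [mul_rpow hc (hz i hi)]; ring
  rw [hsum, mul_rpow (rpow_nonneg hc r)
    (sum_nonneg fun i hi => mul_nonneg (hw i hi) (rpow_nonneg (hz i hi) r)),
    ← rpow_mul hc, mul_one_div_cancel hr, rpow_one]

lemma geom_mean_const_mul (hw1 : ∑ i ∈ s, w i = 1) (hz : ∀ i ∈ s, 0 ≤ z i) {c : ℝ} (hc : 0 < c) :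
    ∏ i ∈ s, (c * z i) ^ w i = c * ∏ i ∈ s, z i ^ w i := by
  rw [prod_congr rfl fun i hi => mul_rpow hc.le (hz i hi), prod_mul_distrib,
    ← rpow_sum_of_pos hc, hw1, rpow_one]

theorem rpow_mean_sub_geom_mean_le_mul_sum_sq (hw : ∀ i ∈ s, 0 ≤ w i) (hw1 : ∑ i ∈ s, w i = 1)
    {x : ι → ℝ} {m r : ℝ} (hm : 0 < m) (hmx : ∀ i ∈ s, m ≤ x i) (hr0 : 0 < r) (hr2 : r ≤ 2) :
    (∑ i ∈ s, w i * x i ^ r) ^ (1 / r) - ∏ i ∈ s, x i ^ w i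
      ≤ r / (2 * m) * ∑ i ∈ s, w i * (x i - ∑ j ∈ s, w j * x j) ^ 2 := by
  set A := ∑ j ∈ s, w j * x j
  have hmA : m ≤ A := by
    calc m = ∑ i ∈ s, w i * m := by rw [← sum_mul, hw1, one_mul]
      _ ≤ A := sum_le_sum fun i hi => mul_le_mul_of_nonneg_left (hmx i hi) (hw i hi)
  have hA : 0 < A := hm.trans_le hmA
  have hz : ∀ i ∈ s, 0 ≤ x i / A := fun i hi => div_nonneg (hm.le.trans (hmx i hi)) hA.le
  have hmean : ∑ i ∈ s, w i * (x i / A) = 1 := by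
    simp only [mul_div_assoc', ← sum_div]
    exact div_self hA.ne'
  have hM := rpow_mean_const_mul hw hz hA.le hr0.ne'
  have hG := geom_mean_const_mul hw1 hz hA
  simp only [mul_div_cancel₀ _ hA.ne'] at hM hG
  have hσ : ∑ i ∈ s, w i * (x i - A) ^ 2 = A ^ 2 * ∑ i ∈ s, w i * (x i / A - 1) ^ 2 := by
    rw [mul_sum]
    exact sum_congr rfl fun i _ => by field_simp
  have hnorm := rpow_mean_sub_geom_mean_le_mul_sum_sq_of_mean_eq_one hw hw1 hmean
    (div_pos hm hA) (fun i hi => div_le_div_of_nonneg_right (hmx i hi) hA.le) hr0 hr2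
  rw [hM, hG, hσ, ← mul_sub]
  calc _ ≤ A * (r / (2 * (m / A)) * ∑ i ∈ s, w i * (x i / A - 1) ^ 2) :=
        mul_le_mul_of_nonneg_left hnorm hA.le
    _ = _ := by field_simp

end Means

/-- For `0 < r ≤ 2`: `M_{n,r} - G_n ≤ (r/(2 x_min)) σ_n`. -/
theorem stmt3 (n : ℕ) (x q : Fin (n + 1) → ℝ)
    (hx : ∀ i, 0 < x i) (hq : ∀ i, 0 < q i) (hsum : ∑ i, q i = 1)
    (r : ℝ) (hr1 : 0 < r) (hr2 : r ≤ 2)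
    (A : ℝ) (hA : A = ∑ i, q i * x i)
    (σ : ℝ) (hσ : σ = ∑ i, q i * (x i - A) ^ 2)
    (xmin : ℝ) (hxmin : xmin = Finset.univ.inf' Finset.univ_nonempty x) :
    (∑ i, q i * x i ^ r) ^ (1 / r) - ∏ i, x i ^ q i
      ≤ r / (2 * xmin) * σ := by
  obtain ⟨i₀, -, hi₀⟩ := exists_mem_eq_inf' univ_nonempty x
  subst hσ hA hxmin
  exact rpow_mean_sub_geom_mean_le_mul_sum_sq (fun i _ => (hq i).le) hsum (hi₀ ▸ hx i₀)
    (fun i _ => inf'_le x (mem_univ i)) hr1 hr2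
end

section
/- If $r > 2$, then the inequality $M_{n,r} - G_n \le \frac{r}{2 x_1} \sigma_n$ fails in general: there exist $n$, positive $x_i$, and positive weights $q_i$ summing to $1$ for which the inequality is violated. (Specifically, for $n=2$, $x_1 = 1 < x_2 = x$, weights $(q, 1-q)$ with $q \to 0^+$, the limit $\lim_{q\to 0^+} (M_{2,r} - G_2 - \frac{r}{2}\sigma_2)/q = \frac{x^r - 1}{r} - \ln x - \frac{r}{2}(x-1)^2$ becomes positive for large $x$ when $r > 2$.) -/
open Real Filter Topology

/-!
Take the two points `1 < t` with weight `ε = (3 / t) ^ r` on `t`. Then `M_r ≥ (ε t ^ r) ^ (1 / r) = 3`,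
while `G = t ^ ε → 1` and `σ ≤ ε t ^ 2 = 3 ^ r t ^ (2 - r) → 0` as `t → ∞` because `r > 2`.
So for large `t`, `M_r - G > 3 - 2 = 1 > (r / 2) σ`, where `x_1 = 1`.
-/

lemma inf'_univ_pair {α : Type*} [LinearOrder α] {a b : α} (h : a ≤ b) :
    Finset.univ.inf' Finset.univ_nonempty ![a, b] = a :=
  le_antisymm (Finset.inf'_le _ (Finset.mem_univ 0)) (Finset.le_inf' _ _ fun i _ => by
    fin_cases i <;> simp [h])

lemma mul_rpow_inv_le {a w b r : ℝ} (ha : 0 ≤ a) (hw : 0 ≤ w) (hb : 0 ≤ b) (hr : 0 < r) :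
    w ^ (1 / r) * b ≤ (a + w * b ^ r) ^ (1 / r) :=
  calc w ^ (1 / r) * b = (w * b ^ r) ^ (1 / r) := by
        rw [mul_rpow hw (by positivity), one_div, rpow_rpow_inv hb hr.ne']
    _ ≤ (a + w * b ^ r) ^ (1 / r) := by gcongr; linarith

lemma tendsto_div_rpow_mul_sq_atTop {r c : ℝ} (hr : 2 < r) (hc : 0 ≤ c) :
    Tendsto (fun t : ℝ => (c / t) ^ r * t ^ 2) atTop (𝓝 0) := by
  have h := (tendsto_rpow_neg_atTop (y := r - 2) (by linarith)).const_mul (c ^ r)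
  rw [mul_zero] at h
  refine h.congr' ?_
  filter_upwards [eventually_gt_atTop 0] with t ht
  rw [div_rpow hc ht.le, neg_sub, rpow_sub ht, ← rpow_two]
  ring

lemma tendsto_rpow_div_rpow_atTop {r c : ℝ} (hr : 0 < r) (hc : 0 ≤ c) :
    Tendsto (fun t : ℝ => t ^ ((c / t) ^ r)) atTop (𝓝 1) := by
  have hlog : Tendsto (fun t : ℝ => c ^ r * (log t / t ^ r)) atTop (𝓝 0) := by
    simpa using ((isLittleO_log_rpow_atTop hr).tendsto_div_nhds_zero).const_mul (c ^ r)
  have h := (continuous_exp.tendsto 0).comp hlog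
  rw [exp_zero] at h
  refine h.congr' ?_
  filter_upwards [eventually_gt_atTop 0] with t ht
  rw [Function.comp_apply, div_rpow hc ht.le, rpow_def_of_pos ht (c ^ r / t ^ r)]
  ring_nf

/-- For `r > 2`, the inequality `M_{n,r} - G_n ≤ (r/(2 x_min)) σ_n` fails in general. -/
theorem stmt5 (r : ℝ) (hr : 2 < r) :
    ∃ (n : ℕ) (x q : Fin (n + 1) → ℝ),
      (∀ i, 0 < x i) ∧ (∀ i, 0 < q i) ∧ (∑ i, q i = 1) ∧
      r / (2 * Finset.univ.inf' Finset.univ_nonempty x) *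
          (∑ i, q i * (x i - ∑ j, q j * x j) ^ 2)
        < (∑ i, q i * x i ^ r) ^ (1 / r) - ∏ i, x i ^ q i := by
  have hr0 : 0 < r := by linarith
  obtain ⟨t, ht, hσ, hG⟩ : ∃ t : ℝ, 3 < t ∧ (3 / t) ^ r * t ^ 2 < 2 / r ∧ t ^ ((3 / t) ^ r) < 2 :=
    ((eventually_gt_atTop 3).and <|
      ((tendsto_div_rpow_mul_sq_atTop hr zero_le_three).eventually_lt_const (by positivity)).and
      ((tendsto_rpow_div_rpow_atTop hr0 zero_le_three).eventually_lt_const one_lt_two)).exists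
  set ε := (3 / t) ^ r
  have hε0 : 0 < ε := by positivity
  have hε1 : ε < 1 := rpow_lt_one (by positivity) ((div_lt_one (by linarith)).2 ht) hr0
  refine ⟨1, ![1, t], ![1 - ε, ε], ?_, ?_, ?_, ?_⟩
  · intro i; fin_cases i <;> simp; linarith
  · intro i; fin_cases i <;> simp [hε0, hε1]
  · simp
  rw [inf'_univ_pair (by linarith), Fin.sum_univ_two, Fin.sum_univ_two, Fin.sum_univ_two,
    Fin.prod_univ_two]
  simp only [Matrix.cons_val_zero, Matrix.cons_val_one, one_rpow, one_mul, mul_one]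
  have hM : 3 ≤ (1 - ε + ε * t ^ r) ^ (1 / r) :=
    calc (3 : ℝ) = ε ^ (1 / r) * t := by
          rw [one_div, rpow_rpow_inv (by positivity) hr0.ne']; field_simp
      _ ≤ _ := mul_rpow_inv_le (by linarith) hε0.le (by linarith) hr0
  calc r / 2 * ((1 - ε) * (1 - (1 - ε + ε * t)) ^ 2 + ε * (t - (1 - ε + ε * t)) ^ 2)
        = r / 2 * (ε * ((1 - ε) * (t - 1) ^ 2)) := by ring
    _ ≤ r / 2 * (ε * t ^ 2) := by gcongr; nlinarith
    _ < 1 := by rw [lt_div_iff₀ hr0] at hσ; linarith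
    _ ≤ _ := by linarith
end

section
/- For $1 < r \le 2$ and $1/2 \le x \le 1$, the function $m(x) = x^r + x^{r-1} - (\frac{3}{r} - \frac{2}{r^2}) x - \frac{1}{r^2}$ is nonnegative. -/
/-!
Factor `x ^ r + x ^ (r - 1) = x ^ (r - 1) * (x + 1)`. Weighted AM–GM bounds `x ^ (2 - r)` by the
convex combination `(r - 1) + (2 - r) * x`, which turns `x ^ (r - 1)` into the rational lower
bound `x / ((r - 1) + (2 - r) * x)`; with it the claim reduces to a polynomial inequality in
`r` and `x`, which factors with the visibly nonnegative factors `r - 1` and `2 * x - 1`.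
-/

open Real

lemma self_le_rpow_mul_add_one_sub_mul {x s : ℝ} (hx : 0 < x) (hs₀ : 0 ≤ s) (hs₁ : s ≤ 1) :
    x ≤ x ^ s * (s + (1 - s) * x) := by
  have amgm : x ^ (1 - s) ≤ s + (1 - s) * x := by
    simpa using geom_mean_le_arith_mean2_weighted hs₀ (sub_nonneg.2 hs₁) zero_le_one hx.le
      (add_sub_cancel s 1)
  calc x = x ^ s * x ^ (1 - s) := by rw [← rpow_add hx, add_sub_cancel, rpow_one]
    _ ≤ x ^ s * (s + (1 - s) * x) := by gcongr

lemma mul_le_sq_mul_mul_add_one {r x : ℝ} (hr₁ : 1 ≤ r) (hr₂ : r ≤ 2) (hx : 1 / 2 ≤ x) :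
    ((3 * r - 2) * x + 1) * ((r - 1) + (2 - r) * x) ≤ r ^ 2 * x * (x + 1) := by
  have factored : r ^ 2 * x * (x + 1) - ((3 * r - 2) * x + 1) * ((r - 1) + (2 - r) * x) =
      (r - 1) * (2 * x - 1) * ((r - 1) * (2 * x + 1) + (2 - r)) := by ring
  have : 0 ≤ (r - 1) * (2 * x - 1) * ((r - 1) * (2 * x + 1) + (2 - r)) := by
    refine mul_nonneg (mul_nonneg ?_ ?_) (add_nonneg (mul_nonneg ?_ ?_) ?_) <;> linarith
  linarith

theorem stmt8_general (r x : ℝ) (hr1 : 1 < r) (hr2 : r ≤ 2)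
    (hx1 : 1 / 2 ≤ x) :
    0 ≤ x ^ r + x ^ (r - 1) - (3 / r - 2 / r ^ 2) * x - 1 / r ^ 2 := by
  have hx0 : 0 < x := by linarith
  have hmean : 0 < (r - 1) + (2 - r) * x := by nlinarith [mul_nonneg (sub_nonneg.2 hr2) hx0.le]
  have hamgm := self_le_rpow_mul_add_one_sub_mul hx0 (s := r - 1) (by linarith) (by linarith)
  rw [show 1 - (r - 1) = 2 - r by ring] at hamgm
  have hlower : (3 * r - 2) * x + 1 ≤ r ^ 2 * (x ^ (r - 1) * (x + 1)) := by
    refine le_of_mul_le_mul_right ?_ hmean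
    calc ((3 * r - 2) * x + 1) * ((r - 1) + (2 - r) * x) ≤ r ^ 2 * x * (x + 1) :=
          mul_le_sq_mul_mul_add_one hr1.le hr2 hx1
      _ ≤ r ^ 2 * (x ^ (r - 1) * ((r - 1) + (2 - r) * x)) * (x + 1) := by gcongr
      _ = r ^ 2 * (x ^ (r - 1) * (x + 1)) * ((r - 1) + (2 - r) * x) := by ring
  have hsplit : x ^ r + x ^ (r - 1) = x ^ (r - 1) * (x + 1) := by
    rw [mul_add_one, ← rpow_add_one hx0.ne', sub_add_cancel]
  have hcoeff : (3 / r - 2 / r ^ 2) * x + 1 / r ^ 2 = ((3 * r - 2) * x + 1) / r ^ 2 := by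
    field_simp
  rw [hsplit, sub_sub, hcoeff, sub_nonneg, div_le_iff₀ (by positivity)]
  linarith

/-- For `1 < r ≤ 2` and `1/2 ≤ x ≤ 1`, `m(x) = x^r + x^{r-1} - (3/r - 2/r²)x - 1/r² ≥ 0`. -/
theorem stmt8 (r x : ℝ) (hr1 : 1 < r) (hr2 : r ≤ 2)
    (hx1 : 1 / 2 ≤ x) (hx2 : x ≤ 1) :
    0 ≤ x ^ r + x ^ (r - 1) - (3 / r - 2 / r ^ 2) * x - 1 / r ^ 2 :=
  stmt8_general r x hr1 hr2 hx1
end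

section
/- For $1/2 \le r < 1$ and $1/2 \le x \le 1$, the function $m(x) = x^r + x^{r-1} - (\frac{3}{r} - \frac{2}{r^2}) x - \frac{1}{r^2}$ is nonpositive. -/
/-!
Bernoulli's inequality bounds `x ^ r` by its tangent line `1 + r (x - 1)` at `x = 1`. Since
`x ↦ x ^ (r - 1)` is convex, on `[1/2, 1]` it lies below its chord, whose value `2 ^ (1 - r)` at
`x = 1/2` is again at most `2 - r` by Bernoulli. Both majorants are affine in `x`, and so is
`(3/r - 2/r²) x + 1/r²`; comparing them at `x = 1/2` and `x = 1` leaves `3 (r - 1)² ≥ 0` and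
`(2r - 1)(1 - r) ≥ 0`.
-/

open Real Set

theorem convexOn_rpow_of_nonpos {p : ℝ} (hp : p ≤ 0) :
    ConvexOn ℝ (Ioi 0) fun x : ℝ ↦ x ^ p := by
  refine ⟨convex_Ioi 0, fun a ha b hb s t hs ht hst ↦ ?_⟩
  have hab : 0 < s * a + t * b := convex_Ioi 0 ha hb hs ht hst
  have hlog := strictConcaveOn_log_Ioi.concaveOn.2 ha hb hs ht hst
  simp only [smul_eq_mul] at hlog ⊢
  rw [rpow_def_of_pos ha, rpow_def_of_pos hb, rpow_def_of_pos hab]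
  calc exp (log (s * a + t * b) * p) ≤ exp (s * (log a * p) + t * (log b * p)) := by
        rw [exp_le_exp, ← mul_assoc, ← mul_assoc, ← add_mul]
        exact mul_le_mul_of_nonpos_right hlog hp
    _ ≤ s * exp (log a * p) + t * exp (log b * p) := by
        simpa using convexOn_exp.2 (mem_univ (log a * p)) (mem_univ (log b * p)) hs ht hst

theorem rpow_le_one_add_mul_sub_one {x p : ℝ} (hx : 0 ≤ x) (hp0 : 0 ≤ p) (hp1 : p ≤ 1) :
    x ^ p ≤ 1 + p * (x - 1) := by
  simpa using rpow_one_add_le_one_add_mul_self (s := x - 1) (by linarith) hp0 hp1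

theorem rpow_le_chord_of_nonpos {x p : ℝ} (hp : p ≤ 0) (hx1 : 1 / 2 ≤ x) (hx2 : x ≤ 1) :
    x ^ p ≤ (2 - 2 * x) * 2 ^ (-p) + (2 * x - 1) := by
  have h := (convexOn_rpow_of_nonpos hp).2 (by norm_num : (1 / 2 : ℝ) ∈ Ioi 0)
    (by norm_num : (1 : ℝ) ∈ Ioi 0) (by linarith : (0 : ℝ) ≤ 2 - 2 * x)
    (by linarith : (0 : ℝ) ≤ 2 * x - 1) (by ring)
  have hx : (2 - 2 * x) • (1 / 2 : ℝ) + (2 * x - 1) • (1 : ℝ) = x := by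
    simp only [smul_eq_mul]; ring
  simp only at h
  rwa [hx, smul_eq_mul, smul_eq_mul, one_rpow, mul_one, one_div, inv_rpow zero_le_two,
    ← rpow_neg zero_le_two] at h

theorem affine_majorant_le {r x : ℝ} (hr1 : 1 / 2 ≤ r) (hr2 : r ≤ 1) (hx1 : 1 / 2 ≤ x)
    (hx2 : x ≤ 1) :
    (1 + r * (x - 1)) + ((2 - 2 * x) * (2 - r) + (2 * x - 1)) ≤
      (3 / r - 2 / r ^ 2) * x + 1 / r ^ 2 := by
  have hr0 : 0 < r := by linarith
  rw [show (3 / r - 2 / r ^ 2) * x + 1 / r ^ 2 = ((3 * r - 2) * x + 1) / r ^ 2 by field_simp,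
    le_div_iff₀ (by positivity)]
  nlinarith [mul_nonneg (by linarith : (0 : ℝ) ≤ 2 * x - 1)
      (mul_nonneg (by linarith : (0 : ℝ) ≤ 2 * r - 1) (by linarith : (0 : ℝ) ≤ 1 - r)),
    mul_nonneg (by linarith : (0 : ℝ) ≤ 2 - 2 * x) (mul_nonneg hr0.le (sq_nonneg (r - 1)))]

/-- For `1/2 ≤ r < 1` and `1/2 ≤ x ≤ 1`, `m(x) = x^r + x^{r-1} - (3/r - 2/r²)x - 1/r² ≤ 0`. -/
theorem stmt9 (r x : ℝ) (hr1 : 1 / 2 ≤ r) (hr2 : r < 1)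
    (hx1 : 1 / 2 ≤ x) (hx2 : x ≤ 1) :
    x ^ r + x ^ (r - 1) - (3 / r - 2 / r ^ 2) * x - 1 / r ^ 2 ≤ 0 := by
  have hpow : x ^ r ≤ 1 + r * (x - 1) :=
    rpow_le_one_add_mul_sub_one (by linarith) (by linarith) hr2.le
  have htwo : (2 : ℝ) ^ (1 - r) ≤ 2 - r := by
    have := rpow_le_one_add_mul_sub_one (x := 2) zero_le_two (by linarith : 0 ≤ 1 - r)
      (by linarith)
    linarith
  have hchord : x ^ (r - 1) ≤ (2 - 2 * x) * 2 ^ (1 - r) + (2 * x - 1) := by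
    simpa using rpow_le_chord_of_nonpos (p := r - 1) (by linarith) hx1 hx2
  have hinv : x ^ (r - 1) ≤ (2 - 2 * x) * (2 - r) + (2 * x - 1) :=
    hchord.trans (by gcongr; linarith)
  linarith [affine_majorant_le hr1 hr2.le hx1 hx2]
end

section
/- For $1/2 < r < 1$, $0 < q < 1$, and $x \ge 1$, the inequality $\frac{r-1}{r}(q + (1-q)x^{-r})^{(1-2r)/r} x^{-r-1} + \frac{1}{r} x^{q-2} \le 1$ holds. -/
/-! The first term carries the negative weight `(r - 1) / r`, and its power factor is at least `1`:
the base `q + (1 - q) x^{-r}` lies in `(0, 1]` and the exponent `(1 - 2r) / r` is nonpositive.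
So with `y = x^{-r-1}` the first term is at most `((r - 1) / r) y`. For the second term,
`x^{q-2} ≤ x^{r^2-1} = y^{1-r} ≤ r + (1 - r) y` by weighted AM-GM, and
`((r - 1) / r) y + (r + (1 - r) y) / r = 1`. -/

open Real

lemma one_le_rpow_affine_combination {q t e : ℝ} (hq0 : 0 < q) (hq1 : q ≤ 1) (ht0 : 0 ≤ t)
    (ht1 : t ≤ 1) (he : e ≤ 0) : 1 ≤ (q + (1 - q) * t) ^ e :=
  one_le_rpow_of_pos_of_le_one_of_nonpos (by nlinarith) (by nlinarith) he

lemma rpow_le_one_sub_add_mul {y p : ℝ} (hy : 0 ≤ y) (hp0 : 0 ≤ p) (hp1 : p ≤ 1) :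
    y ^ p ≤ 1 - p + p * y := by
  have h := rpow_one_add_le_one_add_mul_self (s := y - 1) (by linarith) hp0 hp1
  rw [add_sub_cancel] at h
  linarith

lemma rpow_sub_two_le_of_one_le {x q r : ℝ} (hx : 1 ≤ x) (hq : q ≤ 1) (hr0 : 0 ≤ r)
    (hr1 : r ≤ 1) : x ^ (q - 2) ≤ r + (1 - r) * x ^ (-r - 1) :=
  calc x ^ (q - 2) ≤ x ^ ((-r - 1) * (1 - r)) := rpow_le_rpow_of_exponent_le hx (by nlinarith)
    _ = (x ^ (-r - 1)) ^ (1 - r) := rpow_mul (by linarith) _ _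
    _ ≤ 1 - (1 - r) + (1 - r) * x ^ (-r - 1) :=
      rpow_le_one_sub_add_mul (rpow_nonneg (by linarith) _) (by linarith) (by linarith)
    _ = r + (1 - r) * x ^ (-r - 1) := by ring

/-- For `1/2 < r < 1`, `0 < q < 1`, `x ≥ 1`:
`((r-1)/r)(q + (1-q)x^{-r})^{(1-2r)/r} x^{-r-1} + (1/r) x^{q-2} ≤ 1`. -/
theorem stmt11 (r q x : ℝ) (hr1 : 1 / 2 < r) (hr2 : r < 1)
    (hq1 : 0 < q) (hq2 : q < 1) (hx : 1 ≤ x) :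
    (r - 1) / r * (q + (1 - q) * x ^ (-r)) ^ ((1 - 2 * r) / r) * x ^ (-r - 1)
        + 1 / r * x ^ (q - 2) ≤ 1 := by
  have hr0 : 0 < r := by linarith
  have hy : 0 ≤ x ^ (-r - 1) := rpow_nonneg (by linarith) _
  have hbase : 1 ≤ (q + (1 - q) * x ^ (-r)) ^ ((1 - 2 * r) / r) :=
    one_le_rpow_affine_combination hq1 hq2.le (rpow_nonneg (by linarith) _)
      (rpow_le_one_of_one_le_of_nonpos hx (by linarith))
      (div_nonpos_of_nonpos_of_nonneg (by linarith) hr0.le)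
  have hfirst : (r - 1) / r * (q + (1 - q) * x ^ (-r)) ^ ((1 - 2 * r) / r) * x ^ (-r - 1)
      ≤ (r - 1) / r * 1 * x ^ (-r - 1) :=
    mul_le_mul_of_nonneg_right
      (mul_le_mul_of_nonpos_left hbase (div_nonpos_of_nonpos_of_nonneg (by linarith) hr0.le)) hy
  have hsecond : 1 / r * x ^ (q - 2) ≤ 1 / r * (r + (1 - r) * x ^ (-r - 1)) :=
    mul_le_mul_of_nonneg_left (rpow_sub_two_le_of_one_le hx hq2.le hr0.le hr2.le) (by positivity)
  calc _ ≤ (r - 1) / r * 1 * x ^ (-r - 1) + 1 / r * (r + (1 - r) * x ^ (-r - 1)) :=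
        add_le_add hfirst hsecond
    _ = 1 := by field_simp; ring
end

section
/- For $1/2 < r < 1$, $0 < q < 1$, and $x \ge 1$, the function $D_1(x,q) = (q x^r + 1-q)^{(1-r)/r} x^{r-1} - x^{q-1} - r(1-q)(x-1)$ satisfies $D_1(x,q) \le 0$. -/
/-!
Write `B = x ^ r` and `p = (1 - r) / r`. Since `x ^ (r - 1) = (B⁻¹) ^ p`, the first term is
`(1 + (1 - q) (B⁻¹ - 1)) ^ p`, and two Bernoulli inequalities (exponents `p, r ∈ [0, 1]`) bound it
by `1 + (1 - r) (1 - q) (x⁻¹ - 1)`. With `x ^ (q - 1) ≥ 1 + (q - 1) log x` this leaves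
`D₁ ≤ (1 - q) (log x - (1 - r) (1 - x⁻¹) - r (x - 1))`, and the bracket is nonpositive for
`r ≥ 1/2` because `2 log x ≤ x - x⁻¹`.
-/

open Real

lemma Real.two_mul_log_le_sub_inv {x : ℝ} (hx : 1 ≤ x) : 2 * log x ≤ x - x⁻¹ := by
  have h := self_le_sinh_iff.mpr (log_nonneg hx)
  rw [sinh_log (by linarith)] at h
  linarith

lemma Real.log_le_one_sub_mul_one_sub_inv_add_mul_sub_one {r x : ℝ} (hr : 1 / 2 ≤ r)
    (hx : 1 ≤ x) : log x ≤ (1 - r) * (1 - x⁻¹) + r * (x - 1) := by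
  have hlog := two_mul_log_le_sub_inv hx
  have hinv : x * x⁻¹ = 1 := mul_inv_cancel₀ (by positivity)
  -- `(x - 1) (1 - x⁻¹) = x + x⁻¹ - 2`
  have hgap : 0 ≤ (x - 1) * (1 - x⁻¹) :=
    mul_nonneg (by linarith) (sub_nonneg.mpr (inv_le_one_of_one_le₀ hx))
  nlinarith [mul_nonneg (by linarith : (0 : ℝ) ≤ r - 1 / 2) hgap]

lemma Real.one_add_mul_log_le_rpow {x : ℝ} (hx : 0 < x) (y : ℝ) : 1 + y * log x ≤ x ^ y := by
  rw [rpow_def_of_pos hx]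
  linarith [add_one_le_exp (log x * y), mul_comm y (log x)]

lemma Real.rpow_le_one_add_mul_sub {y r : ℝ} (hy : 0 ≤ y) (hr0 : 0 ≤ r) (hr1 : r ≤ 1) :
    y ^ r ≤ 1 + r * (y - 1) := by
  simpa using rpow_one_add_le_one_add_mul_self (s := y - 1) (by linarith) hr0 hr1

lemma rpow_weighted_mean_mul_rpow_sub_one_eq {r q x : ℝ} (hr : r ≠ 0) (hq0 : 0 ≤ q)
    (hq1 : q ≤ 1) (hx : 0 < x) :
    (q * x ^ r + 1 - q) ^ ((1 - r) / r) * x ^ (r - 1)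
      = (1 + (1 - q) * (x ^ (-r) - 1)) ^ ((1 - r) / r) := by
  have hxr : x ^ r * x ^ (-r) = 1 := by rw [← rpow_add hx, add_neg_cancel, rpow_zero]
  have hsub : x ^ (r - 1) = (x ^ (-r)) ^ ((1 - r) / r) := by
    rw [← rpow_mul hx.le]
    congr 1
    field_simp
    ring
  rw [hsub, ← mul_rpow (by nlinarith [rpow_pos_of_pos hx r]) (rpow_nonneg hx.le _)]
  congr 1
  linear_combination q * hxr

lemma rpow_weighted_mean_mul_rpow_sub_one_le {r q x : ℝ} (hr1 : 1 / 2 ≤ r) (hr2 : r ≤ 1)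
    (hq0 : 0 ≤ q) (hq1 : q ≤ 1) (hx : 0 < x) :
    (q * x ^ r + 1 - q) ^ ((1 - r) / r) * x ^ (r - 1) ≤ 1 + (1 - r) * (1 - q) * (x⁻¹ - 1) := by
  have hr0 : 0 < r := by linarith
  set p := (1 - r) / r with hp
  have hp0 : 0 ≤ p := div_nonneg (by linarith) hr0.le
  have hp1 : p ≤ 1 := by rw [hp, div_le_one hr0]; linarith
  have hpr : p * r = 1 - r := by rw [hp]; field_simp
  have hneg : x ^ (-r) ≤ 1 + r * (x⁻¹ - 1) := by
    rw [rpow_neg hx.le, ← inv_rpow hx.le]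
    exact rpow_le_one_add_mul_sub (inv_nonneg.mpr hx.le) hr0.le hr2
  have hs : -1 ≤ (1 - q) * (x ^ (-r) - 1) := by nlinarith [rpow_nonneg hx.le (-r)]
  rw [rpow_weighted_mean_mul_rpow_sub_one_eq hr0.ne' hq0 hq1 hx]
  calc (1 + (1 - q) * (x ^ (-r) - 1)) ^ p
      ≤ 1 + p * ((1 - q) * (x ^ (-r) - 1)) := rpow_one_add_le_one_add_mul_self hs hp0 hp1
    _ ≤ 1 + p * ((1 - q) * (r * (x⁻¹ - 1))) := by gcongr; linarith
    _ = 1 + (1 - r) * (1 - q) * (x⁻¹ - 1) := by linear_combination (1 - q) * (x⁻¹ - 1) * hpr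

/-- For `1/2 < r < 1`, `0 < q < 1`, `x ≥ 1`:
`D₁(x,q) = (q x^r + 1-q)^{(1-r)/r} x^{r-1} - x^{q-1} - r(1-q)(x-1) ≤ 0`. -/
theorem stmt12 (r q x : ℝ) (hr1 : 1 / 2 < r) (hr2 : r < 1)
    (hq1 : 0 < q) (hq2 : q < 1) (hx : 1 ≤ x) :
    (q * x ^ r + 1 - q) ^ ((1 - r) / r) * x ^ (r - 1) - x ^ (q - 1)
        - r * (1 - q) * (x - 1) ≤ 0 := by
  have hfirst := rpow_weighted_mean_mul_rpow_sub_one_le hr1.le hr2.le hq1.le hq2.le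
    (by linarith : 0 < x)
  have hsecond := one_add_mul_log_le_rpow (by linarith : 0 < x) (q - 1)
  have hlog := mul_le_mul_of_nonneg_left
    (log_le_one_sub_mul_one_sub_inv_add_mul_sub_one hr1.le hx) (by linarith : 0 ≤ 1 - q)
  linarith
end

section
/- For positive reals $x_1, x_2$ with weights $q, 1-q$ ($0 < q < 1$) and $0 < r \le 2$, the two-variable case of the inequality holds: $(q x_1^r + (1-q) x_2^r)^{1/r} - x_1^q x_2^{1-q} \le \frac{r}{2 \min(x_1,x_2)} \left( q(x_1 - A)^2 + (1-q)(x_2 - A)^2 \right)$, where $A = q x_1 + (1-q) x_2$. -/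
/-!
Let `b ≤ a`, so that the minimum is `b`, and write `A`, `G`, `M_r` for the weighted arithmetic,
geometric and `r`-th power means and `σ = w₁ w₂ (a - b)²`.

The case `r = 1`, `A - G ≤ σ / (2b)`, is a second-order Taylor bound for `t ↦ t ^ w₁` at `b`,
whose second derivative is at least `-w₁ w₂ b ^ (w₁ - 2)` on `[b, ∞)`.

For `1 ≤ r ≤ 2` the same Taylor bound for `t ↦ t ^ r` around `A` gives
`M_r ^ r ≤ A ^ r + r (r - 1) b ^ (r - 2) σ / 2`, and the tangent line of the concave
`t ↦ t ^ (1 / r)` at `A ^ r` turns this into `M_r ≤ A + (r - 1) σ / (2b)`; add the case `r = 1`.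

For `r ≤ 1` the tangent line of the concave `t ↦ t ^ r` at `M_r` gives
`r a ^ (r - 1) (M_r - G) ≤ M_r ^ r - G ^ r`, and the case `r = 1` at the points `a ^ r, b ^ r`
bounds the right side by `w₁ w₂ (a ^ r - b ^ r)² / (2 b ^ r)`. What remains is
`a ^ (1 - r) (a ^ r - b ^ r)² ≤ r² b ^ (r - 1) (a - b)²`; with `a = e ^ (c + d)`, `b = e ^ (c - d)`
both sides carry the same factor and this is `sinh (r d) ≤ r sinh d`, the convexity of `sinh`
on `[0, ∞)`.
-/

open Set

lemma ConcaveOn.le_add_mul_sub_of_hasDerivAt {S : Set ℝ} {f : ℝ → ℝ} {f' a x : ℝ}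
    (hf : ConcaveOn ℝ S f) (ha : a ∈ S) (hx : x ∈ S) (hfa : HasDerivAt f f' a) :
    f x ≤ f a + f' * (x - a) := by
  rcases lt_trichotomy x a with hxa | rfl | hax
  · have h := hf.le_slope_of_hasDerivAt hx ha hxa hfa
    rw [slope_def_field, le_div_iff₀ (sub_pos.2 hxa)] at h
    linarith
  · simp
  · have h := hf.slope_le_of_hasDerivAt ha hx hax hfa
    rw [slope_def_field, div_le_iff₀ (sub_pos.2 hax)] at h
    linarith

lemma le_add_mul_sub_add_sq_of_deriv2_le {D : Set ℝ} {f f' f'' : ℝ → ℝ} {K a x : ℝ}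
    (hD : Convex ℝ D) (hf : ∀ y ∈ D, HasDerivAt f (f' y) y)
    (hf' : ∀ y ∈ D, HasDerivAt f' (f'' y) y) (hK : ∀ y ∈ D, f'' y ≤ K)
    (ha : a ∈ D) (hx : x ∈ D) :
    f x ≤ f a + f' a * (x - a) + K / 2 * (x - a) ^ 2 := by
  set g : ℝ → ℝ := fun y => f y - K / 2 * (y - a) ^ 2
  have hg : ∀ y ∈ D, HasDerivAt g (f' y - K * (y - a)) y := fun y hy =>
    ((hf y hy).sub ((((hasDerivAt_id y).sub_const a).pow 2).const_mul (K / 2))).congr_deriv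
      (by simp; ring)
  have hg' : ∀ y ∈ D, HasDerivAt (fun y => f' y - K * (y - a)) (f'' y - K) y := fun y hy =>
    ((hf' y hy).sub (((hasDerivAt_id y).sub_const a).const_mul K)).congr_deriv (by simp)
  have hconc : ConcaveOn ℝ D g :=
    concaveOn_of_hasDerivWithinAt2_nonpos hD
      (fun y hy => (hg y hy).continuousAt.continuousWithinAt)
      (fun y hy => (hg y (interior_subset hy)).hasDerivWithinAt)
      (fun y hy => (hg' y (interior_subset hy)).hasDerivWithinAt)
      (fun y hy => sub_nonpos.2 (hK y (interior_subset hy)))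
  have := hconc.le_add_mul_sub_of_hasDerivAt ha hx (hg a ha)
  simp only [g, sub_self] at this
  linarith

namespace Real

lemma rpow_le_add_mul_sub {s u v : ℝ} (hs₀ : 0 ≤ s) (hs₁ : s ≤ 1) (hu : 0 < u)
    (hv : 0 ≤ v) : v ^ s ≤ u ^ s + s * u ^ (s - 1) * (v - u) :=
  (concaveOn_rpow hs₀ hs₁).le_add_mul_sub_of_hasDerivAt (mem_Ici.2 hu.le) (mem_Ici.2 hv)
    (hasDerivAt_rpow_const (Or.inl hu.ne'))

lemma hasDerivAt_const_mul_rpow_sub_one {p y : ℝ} (hy : 0 < y) :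
    HasDerivAt (fun y => p * y ^ (p - 1)) (p * (p - 1) * y ^ (p - 2)) y :=
  ((hasDerivAt_rpow_const (Or.inl hy.ne')).const_mul p).congr_deriv
    (by rw [sub_sub, one_add_one_eq_two]; ring)

lemma rpow_le_add_mul_sub_add_sq {p m a x : ℝ} (hp₁ : 1 ≤ p) (hp₂ : p ≤ 2) (hm : 0 < m)
    (ha : m ≤ a) (hx : m ≤ x) :
    x ^ p ≤ a ^ p + p * a ^ (p - 1) * (x - a) + p * (p - 1) * m ^ (p - 2) / 2 * (x - a) ^ 2 :=
  le_add_mul_sub_add_sq_of_deriv2_le (convex_Ici m)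
    (fun y hy => hasDerivAt_rpow_const (Or.inl (hm.trans_le hy).ne'))
    (fun y hy => hasDerivAt_const_mul_rpow_sub_one (hm.trans_le hy))
    (fun y hy => mul_le_mul_of_nonneg_left (rpow_le_rpow_of_nonpos hm hy (by linarith))
      (by nlinarith))
    ha hx

lemma add_mul_sub_sub_sq_le_rpow {p m a x : ℝ} (hp₀ : 0 ≤ p) (hp₁ : p ≤ 1) (hm : 0 < m)
    (ha : m ≤ a) (hx : m ≤ x) :
    a ^ p + p * a ^ (p - 1) * (x - a) - p * (1 - p) * m ^ (p - 2) / 2 * (x - a) ^ 2 ≤ x ^ p := by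
  have := le_add_mul_sub_add_sq_of_deriv2_le (f := fun y => -y ^ p)
    (f' := fun y => -(p * y ^ (p - 1))) (convex_Ici m)
    (fun y hy => (hasDerivAt_rpow_const (Or.inl (hm.trans_le hy).ne')).neg)
    (fun y hy => (hasDerivAt_const_mul_rpow_sub_one (hm.trans_le hy)).neg)
    (fun y hy => show -(p * (p - 1) * y ^ (p - 2)) ≤ p * (1 - p) * m ^ (p - 2) by
      nlinarith [rpow_le_rpow_of_nonpos hm hy (by linarith : p - 2 ≤ 0),
        mul_nonneg hp₀ (sub_nonneg.2 hp₁)])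
    ha hx
  linarith

theorem arith_mean_sub_geom_mean_le_weighted {w₁ w₂ a b : ℝ} (hw₁ : 0 ≤ w₁) (hw₂ : 0 ≤ w₂)
    (hw : w₁ + w₂ = 1) (hb : 0 < b) (hba : b ≤ a) :
    w₁ * a + w₂ * b - a ^ w₁ * b ^ w₂ ≤ w₁ * w₂ * (a - b) ^ 2 / (2 * b) := by
  obtain rfl : w₂ = 1 - w₁ := by linarith
  have h := mul_le_mul_of_nonneg_right
    (add_mul_sub_sub_sq_le_rpow hw₁ (by linarith) hb le_rfl hba) (rpow_nonneg hb.le (1 - w₁))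
  have e₀ : b ^ w₁ * b ^ (1 - w₁) = b := by rw [← rpow_add hb]; norm_num
  have e₁ : b ^ (w₁ - 1) * b ^ (1 - w₁) = 1 := by rw [← rpow_add hb]; norm_num
  have e₂ : b ^ (w₁ - 2) * b ^ (1 - w₁) = b⁻¹ := by rw [← rpow_add hb]; norm_num [rpow_neg_one]
  have : (b ^ w₁ + w₁ * b ^ (w₁ - 1) * (a - b) - w₁ * (1 - w₁) * b ^ (w₁ - 2) / 2 * (a - b) ^ 2)
      * b ^ (1 - w₁) = w₁ * a + (1 - w₁) * b - w₁ * (1 - w₁) * (a - b) ^ 2 / (2 * b) := by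
    linear_combination e₀ + w₁ * (a - b) * e₁ - w₁ * (1 - w₁) / 2 * (a - b) ^ 2 * e₂
  rw [this] at h
  linarith

lemma convexOn_sinh : ConvexOn ℝ (Ici 0) sinh :=
  MonotoneOn.convexOn_of_deriv (convex_Ici 0) continuous_sinh.continuousOn
    differentiable_sinh.differentiableOn
    (by rw [deriv_sinh]; exact cosh_strictMonoOn.monotoneOn.mono interior_subset)

lemma sinh_mul_le_mul_sinh {r d : ℝ} (hr₀ : 0 ≤ r) (hr₁ : r ≤ 1) (hd : 0 ≤ d) :
    sinh (r * d) ≤ r * sinh d := by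
  simpa using convexOn_sinh.2 (mem_Ici.2 hd) self_mem_Ici hr₀ (sub_nonneg.2 hr₁) (by ring)

lemma rpow_mul_rpow_sub_rpow_sq_le {a b r : ℝ} (hb : 0 < b) (hba : b ≤ a) (hr₀ : 0 ≤ r)
    (hr₁ : r ≤ 1) : a ^ (1 - r) * (a ^ r - b ^ r) ^ 2 ≤ r ^ 2 * b ^ (r - 1) * (a - b) ^ 2 := by
  obtain ⟨x, rfl⟩ : ∃ x, exp x = a := ⟨log a, exp_log (hb.trans_le hba)⟩
  obtain ⟨y, rfl⟩ : ∃ y, exp y = b := ⟨log b, exp_log hb⟩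
  set d := (x - y) / 2
  have hd : 0 ≤ d := by have := exp_le_exp.1 hba; simp only [d]; linarith
  set c := exp ((1 + r) * (x + y) / 2 + (1 - r) * d)
  have hl : exp x ^ (1 - r) * (exp x ^ r - exp y ^ r) ^ 2 = 4 * c * sinh (r * d) ^ 2 := by
    simp only [← exp_mul, sinh_eq, c, d]
    ring_nf
    simp only [← exp_add, ← exp_nat_mul]
    ring_nf
  have hr : exp y ^ (r - 1) * (exp x - exp y) ^ 2 = 4 * c * sinh d ^ 2 := by
    simp only [← exp_mul, sinh_eq, c, d]
    ring_nf
    simp only [← exp_add, ← exp_nat_mul]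
    ring_nf
  have hsinh : sinh (r * d) ^ 2 ≤ (r * sinh d) ^ 2 :=
    pow_le_pow_left₀ (sinh_nonneg_iff.2 (mul_nonneg hr₀ hd)) (sinh_mul_le_mul_sinh hr₀ hr₁ hd) 2
  rw [hl, mul_assoc (r ^ 2), hr]
  have hc : 0 ≤ 4 * c := by positivity
  nlinarith [mul_le_mul_of_nonneg_left hsinh hc]

lemma rpow_mean_le {w₁ w₂ a b r : ℝ} (hw₁ : 0 ≤ w₁) (hw₂ : 0 ≤ w₂) (hw : w₁ + w₂ = 1)
    (hb : 0 ≤ b) (hba : b ≤ a) (hr₀ : 0 < r) : (w₁ * a ^ r + w₂ * b ^ r) ^ (1 / r) ≤ a := calc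
  _ ≤ (a ^ r) ^ (1 / r) := by
      have hbra := rpow_le_rpow hb hba hr₀.le
      gcongr
      · exact add_nonneg (mul_nonneg hw₁ (rpow_nonneg (hb.trans hba) r))
          (mul_nonneg hw₂ (rpow_nonneg hb r))
      · linear_combination mul_le_mul_of_nonneg_left hbra hw₂ + a ^ r * hw
  _ = a := by rw [← rpow_mul (hb.trans hba), mul_one_div_cancel hr₀.ne', rpow_one]

lemma rpow_mean_sub_geom_mean_le_of_le_one {w₁ w₂ a b r : ℝ} (hw₁ : 0 ≤ w₁) (hw₂ : 0 ≤ w₂)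
    (hw : w₁ + w₂ = 1) (hb : 0 < b) (hba : b ≤ a) (hr₀ : 0 < r) (hr₁ : r ≤ 1) :
    (w₁ * a ^ r + w₂ * b ^ r) ^ (1 / r) - a ^ w₁ * b ^ w₂
      ≤ r / (2 * b) * (w₁ * w₂ * (a - b) ^ 2) := by
  have ha : 0 < a := hb.trans_le hba
  have hbra : b ^ r ≤ a ^ r := rpow_le_rpow hb.le hba hr₀.le
  set E := w₁ * a ^ r + w₂ * b ^ r
  set M := E ^ (1 / r)
  set G := a ^ w₁ * b ^ w₂
  have hE : 0 < E := by nlinarith [rpow_pos_of_pos hb r]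
  have hM : 0 < M := rpow_pos_of_pos hE _
  have hMr : M ^ r = E := by rw [← rpow_mul hE.le, one_div_mul_cancel hr₀.ne', rpow_one]
  have hMa : M ≤ a := rpow_mean_le hw₁ hw₂ hw hb.le hba hr₀
  have hGr : G ^ r = (a ^ r) ^ w₁ * (b ^ r) ^ w₂ := by
    rw [mul_rpow (by positivity) (by positivity), ← rpow_mul ha.le, ← rpow_mul ha.le,
      ← rpow_mul hb.le, ← rpow_mul hb.le, mul_comm w₁, mul_comm w₂]
  rcases le_or_gt M G with hMG | hGM
  · have : 0 ≤ r / (2 * b) * (w₁ * w₂ * (a - b) ^ 2) := by positivity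
    linarith
  have htangent : r * a ^ (r - 1) * (M - G) ≤ M ^ r - G ^ r := by
    have h₁ := rpow_le_add_mul_sub hr₀.le hr₁ hM (by positivity : 0 ≤ G)
    have h₂ : a ^ (r - 1) ≤ M ^ (r - 1) := rpow_le_rpow_of_nonpos hM hMa (by linarith)
    nlinarith [mul_le_mul_of_nonneg_left h₂ (mul_nonneg hr₀.le (sub_nonneg.2 hGM.le))]
  have hamgm : M ^ r - G ^ r ≤ w₁ * w₂ * (a ^ r - b ^ r) ^ 2 / (2 * b ^ r) := by
    rw [hMr, hGr]
    exact arith_mean_sub_geom_mean_le_weighted hw₁ hw₂ hw (rpow_pos_of_pos hb r) hbra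
  have ha₁ : a ^ (1 - r) * a ^ (r - 1) = 1 := by rw [← rpow_add ha]; norm_num
  refine le_of_mul_le_mul_left ?_ hr₀
  calc r * (M - G) = a ^ (1 - r) * (r * a ^ (r - 1) * (M - G)) := by
        linear_combination (-(r * (M - G))) * ha₁
    _ ≤ a ^ (1 - r) * (w₁ * w₂ * (a ^ r - b ^ r) ^ 2 / (2 * b ^ r)) := by
        gcongr
        linarith
    _ = w₁ * w₂ / (2 * b ^ r) * (a ^ (1 - r) * (a ^ r - b ^ r) ^ 2) := by ring
    _ ≤ w₁ * w₂ / (2 * b ^ r) * (r ^ 2 * b ^ (r - 1) * (a - b) ^ 2) :=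
        mul_le_mul_of_nonneg_left (rpow_mul_rpow_sub_rpow_sq_le hb hba hr₀.le hr₁) (by positivity)
    _ = r * (r / (2 * b) * (w₁ * w₂ * (a - b) ^ 2)) := by
        rw [rpow_sub_one hb.ne']
        field_simp

lemma rpow_mean_le_arith_mean_add {w₁ w₂ a b r : ℝ} (hw₁ : 0 ≤ w₁) (hw₂ : 0 ≤ w₂)
    (hw : w₁ + w₂ = 1) (hb : 0 < b) (hba : b ≤ a) (hr₁ : 1 ≤ r) (hr₂ : r ≤ 2) :
    (w₁ * a ^ r + w₂ * b ^ r) ^ (1 / r)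
      ≤ w₁ * a + w₂ * b + (r - 1) * (w₁ * w₂ * (a - b) ^ 2) / (2 * b) := by
  have hr₀ : 0 < r := by linarith
  obtain rfl : w₂ = 1 - w₁ := by linarith
  set A := w₁ * a + (1 - w₁) * b
  set σ := w₁ * (1 - w₁) * (a - b) ^ 2
  set K := r * (r - 1) * b ^ (r - 2) / 2
  have hbA : b ≤ A := by nlinarith
  have hA : 0 < A := hb.trans_le hbA
  have hK : 0 ≤ K := by
    have := rpow_pos_of_pos hb (r - 2)
    have : 0 ≤ r * (r - 1) := by nlinarith
    positivity
  have hσ : 0 ≤ σ := mul_nonneg (mul_nonneg hw₁ hw₂) (sq_nonneg _)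
  have hE : 0 ≤ w₁ * a ^ r + (1 - w₁) * b ^ r :=
    add_nonneg (mul_nonneg hw₁ (rpow_pos_of_pos (hb.trans_le hba) r).le)
      (mul_nonneg hw₂ (rpow_pos_of_pos hb r).le)
  have htaylor : w₁ * a ^ r + (1 - w₁) * b ^ r ≤ A ^ r + K * σ := calc
    _ ≤ w₁ * (A ^ r + r * A ^ (r - 1) * (a - A) + K * (a - A) ^ 2)
          + (1 - w₁) * (A ^ r + r * A ^ (r - 1) * (b - A) + K * (b - A) ^ 2) := by
        gcongr
        · exact rpow_le_add_mul_sub_add_sq hr₁ hr₂ hb hbA hba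
        · exact rpow_le_add_mul_sub_add_sq hr₁ hr₂ hb hbA le_rfl
    _ = A ^ r + K * σ := by ring
  have hArA : (A ^ r) ^ (1 / r - 1) = A ^ (1 - r) := by
    rw [← rpow_mul hA.le]
    congr 1
    field_simp
  have hb₁ : b ^ (1 - r) * b ^ (r - 2) = b⁻¹ := by rw [← rpow_add hb]; norm_num [rpow_neg_one]
  calc _ ≤ (A ^ r + K * σ) ^ (1 / r) := rpow_le_rpow hE htaylor (by positivity)
    _ ≤ (A ^ r) ^ (1 / r) + 1 / r * (A ^ r) ^ (1 / r - 1) * (A ^ r + K * σ - A ^ r) :=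
        rpow_le_add_mul_sub (by positivity) (div_le_one_of_le₀ hr₁ hr₀.le)
          (rpow_pos_of_pos hA r) (by positivity)
    _ = A + A ^ (1 - r) * K * σ / r := by
        rw [hArA, ← rpow_mul hA.le, mul_one_div_cancel hr₀.ne', rpow_one]
        ring
    _ ≤ A + b ^ (1 - r) * K * σ / r := by
        have := rpow_le_rpow_of_nonpos hb hbA (by linarith : 1 - r ≤ 0)
        have := mul_le_mul_of_nonneg_right (mul_le_mul_of_nonneg_right this hK) hσ
        linarith [div_le_div_of_nonneg_right this hr₀.le]
    _ = A + (r - 1) * σ / (2 * b) := by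
        rw [show b ^ (1 - r) * K = r * (r - 1) / 2 * b⁻¹ by
          simp only [K]; linear_combination r * (r - 1) / 2 * hb₁]
        field_simp

lemma rpow_mean_sub_geom_mean_le {w₁ w₂ a b r : ℝ} (hw₁ : 0 ≤ w₁) (hw₂ : 0 ≤ w₂)
    (hw : w₁ + w₂ = 1) (hb : 0 < b) (hba : b ≤ a) (hr₀ : 0 < r) (hr₂ : r ≤ 2) :
    (w₁ * a ^ r + w₂ * b ^ r) ^ (1 / r) - a ^ w₁ * b ^ w₂
      ≤ r / (2 * b) * (w₁ * w₂ * (a - b) ^ 2) := by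
  rcases le_total r 1 with hr₁ | hr₁
  · exact rpow_mean_sub_geom_mean_le_of_le_one hw₁ hw₂ hw hb hba hr₀ hr₁
  · have hM := rpow_mean_le_arith_mean_add hw₁ hw₂ hw hb hba hr₁ hr₂
    have hAG := arith_mean_sub_geom_mean_le_weighted hw₁ hw₂ hw hb hba
    have : r / (2 * b) * (w₁ * w₂ * (a - b) ^ 2)
        = (r - 1) * (w₁ * w₂ * (a - b) ^ 2) / (2 * b) + w₁ * w₂ * (a - b) ^ 2 / (2 * b) := by
      ring
    linarith

end Real

/-- Two-variable case, `0 < r ≤ 2`: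
`M_{2,r} - G_2 ≤ (r/(2 min(x₁,x₂))) σ_2`. -/
theorem stmt13 (x₁ x₂ q r : ℝ) (hx₁ : 0 < x₁) (hx₂ : 0 < x₂)
    (hq1 : 0 < q) (hq2 : q < 1) (hr1 : 0 < r) (hr2 : r ≤ 2)
    (A : ℝ) (hA : A = q * x₁ + (1 - q) * x₂) :
    (q * x₁ ^ r + (1 - q) * x₂ ^ r) ^ (1 / r) - x₁ ^ q * x₂ ^ (1 - q)
      ≤ r / (2 * min x₁ x₂) * (q * (x₁ - A) ^ 2 + (1 - q) * (x₂ - A) ^ 2) := by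
  have hσ : q * (x₁ - A) ^ 2 + (1 - q) * (x₂ - A) ^ 2 = q * (1 - q) * (x₁ - x₂) ^ 2 := by
    subst hA
    ring
  rw [hσ]
  rcases le_total x₂ x₁ with h | h
  · rw [min_eq_right h]
    exact Real.rpow_mean_sub_geom_mean_le hq1.le (by linarith) (by ring) hx₂ h hr1 hr2
  · rw [min_eq_left h, add_comm, mul_comm (x₁ ^ q)]
    convert Real.rpow_mean_sub_geom_mean_le (w₁ := 1 - q) (w₂ := q) (by linarith) hq1.le (by ring)
      hx₁ h hr1 hr2 using 2
    ring
end

section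
/- For positive reals $x_1, x_2$ with weights $q, 1-q$ ($0 < q < 1$) and $1 \le r \le 3$, the two-variable inequality $(q x_1^r + (1-q) x_2^r)^{1/r} - x_1^q x_2^{1-q} \ge \frac{r}{2 \max(x_1,x_2)} \left( q(x_1 - A)^2 + (1-q)(x_2 - A)^2 \right)$ holds, where $A = q x_1 + (1-q) x_2$. -/
/-!
Both sides are homogeneous of degree one and the statement is symmetric under
`(x₁, x₂, q) ↦ (x₂, x₁, 1 - q)`, so it suffices to take `x₂ = t x₁` with `0 < t ≤ 1`.
The normalized gap `φ(t)` vanishes at `t = 1`, and it is antitone on `(0, 1]`: bounding the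
power mean below by the geometric mean, `φ' ≤ 0` reduces to `s ^ r + r s (1 - s) ≤ 1` for
`s = t ^ q`. This holds because `r ↦ s ^ r` is convex, so for `1 ≤ r ≤ 3` it lies below its
chord `((3 - r) s + (r - 1) s ^ 3) / 2` through `r = 1` and `r = 3`.
-/

open Real Set

lemma rpow_le_of_one_le_of_le_three {s r : ℝ} (hs : 0 ≤ s) (hr1 : 1 ≤ r) (hr3 : r ≤ 3) :
    s ^ r ≤ (3 - r) / 2 * s + (r - 1) / 2 * s ^ 3 := by
  rcases hs.eq_or_lt with rfl | hs
  · rw [zero_rpow (by linarith)]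
    norm_num
  have h := (convexOn_rpow_left hs).2 (mem_univ 1) (mem_univ 3)
    (show 0 ≤ (3 - r) / 2 by linarith) (show 0 ≤ (r - 1) / 2 by linarith) (by ring)
  simp only [smul_eq_mul, rpow_one] at h
  rw [show (3 - r) / 2 * 1 + (r - 1) / 2 * 3 = r by ring] at h
  exact_mod_cast h

lemma rpow_add_mul_mul_one_sub_le_one {s r : ℝ} (hs0 : 0 ≤ s) (hs1 : s ≤ 1)
    (hr1 : 1 ≤ r) (hr3 : r ≤ 3) :
    s ^ r + r * s * (1 - s) ≤ 1 := by
  have := rpow_le_of_one_le_of_le_three hs0 hr1 hr3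
  nlinarith [mul_nonneg (by linarith : (0 : ℝ) ≤ 3 - r) (sq_nonneg (1 - s)),
    mul_nonneg (by linarith : (0 : ℝ) ≤ r - 1) (pow_nonneg (by linarith : (0 : ℝ) ≤ 1 - s) 3)]

lemma rpow_mul_sub_one_add_mul_one_sub_le_rpow_neg {t q r : ℝ} (ht0 : 0 < t) (ht1 : t ≤ 1)
    (hq0 : 0 ≤ q) (hq1 : q ≤ 1) (hr1 : 1 ≤ r) (hr3 : r ≤ 3) :
    t ^ (q * (r - 1)) + r * q * (1 - t) ≤ t ^ (-q) := by
  set s := t ^ q with hs_def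
  have hs0 : 0 < s := rpow_pos_of_pos ht0 q
  have hbernoulli : q * (1 - t) ≤ 1 - s := by
    have := rpow_one_add_le_one_add_mul_self (s := t - 1) (by linarith) hq0 hq1
    rw [add_sub_cancel] at this
    linarith
  have hpoly := rpow_add_mul_mul_one_sub_le_one hs0.le (rpow_le_one ht0.le ht1 hq0) hr1 hr3
  have hpow : t ^ (q * (r - 1)) = s ^ r / s := by
    rw [hs_def, ← rpow_mul ht0.le, ← rpow_sub ht0]
    ring_nf
  rw [hpow, rpow_neg ht0.le, ← hs_def, div_add' _ _ _ hs0.ne', div_le_iff₀ hs0,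
    inv_mul_cancel₀ hs0.ne']
  nlinarith [mul_le_mul_of_nonneg_left hbernoulli (by positivity : 0 ≤ r * s)]

lemma rpow_mul_powerMean_rpow_add_le_rpow_neg {t q r : ℝ} (ht0 : 0 < t) (ht1 : t ≤ 1)
    (hq0 : 0 ≤ q) (hq1 : q ≤ 1) (hr1 : 1 ≤ r) (hr3 : r ≤ 3) :
    t ^ (r - 1) * (q + (1 - q) * t ^ r) ^ (1 / r - 1) + r * q * (1 - t) ≤ t ^ (-q) := by
  have hr0 : 0 < r := by linarith
  have hgeom : t ^ (r * (1 - q)) ≤ q + (1 - q) * t ^ r := by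
    have h := geom_mean_le_arith_mean2_weighted hq0 (sub_nonneg.2 hq1) zero_le_one
      (rpow_nonneg ht0.le r) (by ring)
    rwa [one_rpow, one_mul, mul_one, ← rpow_mul ht0.le] at h
  have hexp : 1 / r - 1 ≤ 0 := by
    rw [sub_nonpos, div_le_one hr0]
    exact hr1
  have hmean : t ^ (r - 1) * (q + (1 - q) * t ^ r) ^ (1 / r - 1) ≤ t ^ (q * (r - 1)) :=
    calc t ^ (r - 1) * (q + (1 - q) * t ^ r) ^ (1 / r - 1)
        ≤ t ^ (r - 1) * (t ^ (r * (1 - q))) ^ (1 / r - 1) := by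
          gcongr t ^ (r - 1) * ?_
          exact rpow_le_rpow_of_nonpos (rpow_pos_of_pos ht0 _) hgeom hexp
      _ = t ^ (q * (r - 1)) := by
          rw [← rpow_mul ht0.le, ← rpow_add ht0]
          congr 1
          field_simp
          ring
  linarith [rpow_mul_sub_one_add_mul_one_sub_le_rpow_neg ht0 ht1 hq0 hq1 hr1 hr3]

/-- Right-hand side minus left-hand side of the inequality at `x₁ = 1`, `x₂ = t`. -/
noncomputable def twoPointGap (q r t : ℝ) : ℝ :=
  (q + (1 - q) * t ^ r) ^ (1 / r) - t ^ (1 - q) - r / 2 * q * (1 - q) * (1 - t) ^ 2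

lemma hasDerivAt_twoPointGap {q r t : ℝ} (ht : 0 < t) (hq0 : 0 ≤ q) (hq1 : q ≤ 1)
    (hr : r ≠ 0) :
    HasDerivAt (twoPointGap q r)
      ((1 - q) * (t ^ (r - 1) * (q + (1 - q) * t ^ r) ^ (1 / r - 1) + r * q * (1 - t)
        - t ^ (-q))) t := by
  have hmean : 0 < q + (1 - q) * t ^ r := by
    rcases hq0.eq_or_lt with rfl | hq0
    · simpa using rpow_pos_of_pos ht r
    · have : 0 ≤ (1 - q) * t ^ r := mul_nonneg (by linarith) (rpow_nonneg ht.le r)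
      linarith
  have hpow : HasDerivAt (fun t : ℝ => (q + (1 - q) * t ^ r) ^ (1 / r))
      ((1 - q) * (r * t ^ (r - 1)) * (1 / r) * (q + (1 - q) * t ^ r) ^ (1 / r - 1)) t :=
    (((hasDerivAt_rpow_const (Or.inl ht.ne')).const_mul (1 - q)).const_add q).rpow_const
      (Or.inl hmean.ne')
  have hgeom : HasDerivAt (fun t : ℝ => t ^ (1 - q)) ((1 - q) * t ^ (1 - q - 1)) t :=
    hasDerivAt_rpow_const (Or.inl ht.ne')
  have hsq : HasDerivAt (fun t : ℝ => r / 2 * q * (1 - q) * (1 - t) ^ 2)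
      (-(r * q * (1 - q) * (1 - t))) t := by
    refine ((((hasDerivAt_id t).const_sub 1).pow 2).const_mul
      (r / 2 * q * (1 - q))).congr_deriv ?_
    simp only [id, Nat.cast_ofNat]
    ring
  refine ((hpow.sub hgeom).sub hsq).congr_deriv ?_
  rw [show 1 - q - 1 = -q by ring]
  field_simp
  ring

lemma twoPointGap_antitoneOn {q r : ℝ} (hq0 : 0 ≤ q) (hq1 : q ≤ 1) (hr1 : 1 ≤ r) (hr3 : r ≤ 3) :
    AntitoneOn (twoPointGap q r) (Ioc 0 1) := by
  have hr : r ≠ 0 := by positivity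
  refine antitoneOn_of_hasDerivWithinAt_nonpos (convex_Ioc 0 1)
    (f' := fun t => (1 - q) * (t ^ (r - 1) * (q + (1 - q) * t ^ r) ^ (1 / r - 1)
      + r * q * (1 - t) - t ^ (-q)))
    (fun t ht => (hasDerivAt_twoPointGap ht.1 hq0 hq1 hr).continuousAt.continuousWithinAt)
    (fun t ht => ?_) (fun t ht => ?_)
  · rw [interior_Ioc] at ht
    exact (hasDerivAt_twoPointGap ht.1 hq0 hq1 hr).hasDerivWithinAt
  · rw [interior_Ioc] at ht
    exact mul_nonpos_of_nonneg_of_nonpos (sub_nonneg.2 hq1) (sub_nonpos.2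
      (rpow_mul_powerMean_rpow_add_le_rpow_neg ht.1 ht.2.le hq0 hq1 hr1 hr3))

lemma twoPointGap_nonneg {q r t : ℝ} (ht0 : 0 < t) (ht1 : t ≤ 1) (hq0 : 0 ≤ q) (hq1 : q ≤ 1)
    (hr1 : 1 ≤ r) (hr3 : r ≤ 3) :
    0 ≤ twoPointGap q r t := by
  have hgap_one : twoPointGap q r 1 = 0 := by simp [twoPointGap]
  rw [← hgap_one]
  exact twoPointGap_antitoneOn hq0 hq1 hr1 hr3 ⟨ht0, ht1⟩ ⟨one_pos, le_rfl⟩ ht1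

lemma div_mul_sq_sub_le_powerMean_sub_geomMean_of_le {x y q r : ℝ} (hy : 0 < y) (hyx : y ≤ x)
    (hq0 : 0 ≤ q) (hq1 : q ≤ 1) (hr1 : 1 ≤ r) (hr3 : r ≤ 3) :
    r / (2 * x) * (q * (1 - q) * (x - y) ^ 2)
      ≤ (q * x ^ r + (1 - q) * y ^ r) ^ (1 / r) - x ^ q * y ^ (1 - q) := by
  have hx : 0 < x := hy.trans_le hyx
  obtain ⟨t, ht0, rfl⟩ : ∃ t, 0 < t ∧ y = x * t := ⟨y / x, by positivity, by field_simp⟩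
  have ht1 : t ≤ 1 := by nlinarith
  have hmean : (q * x ^ r + (1 - q) * (x * t) ^ r) ^ (1 / r)
      = x * (q + (1 - q) * t ^ r) ^ (1 / r) := by
    rw [mul_rpow hx.le ht0.le, show q * x ^ r + (1 - q) * (x ^ r * t ^ r)
      = x ^ r * (q + (1 - q) * t ^ r) by ring, mul_rpow (by positivity) (by
        nlinarith [rpow_nonneg ht0.le r]), ← rpow_mul hx.le, mul_one_div_cancel (by positivity),
      rpow_one]
  have hgeom : x ^ q * (x * t) ^ (1 - q) = x * t ^ (1 - q) := by
    rw [mul_rpow hx.le ht0.le, ← mul_assoc, ← rpow_add hx, add_sub_cancel, rpow_one]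
  have hlhs : r / (2 * x) * (q * (1 - q) * (x - x * t) ^ 2)
      = x * (r / 2 * q * (1 - q) * (1 - t) ^ 2) := by
    field_simp
  have hgap := mul_nonneg hx.le (twoPointGap_nonneg ht0 ht1 hq0 hq1 hr1 hr3)
  rw [twoPointGap] at hgap
  rw [hmean, hgeom]
  linarith

/-- Two-variable case, `1 ≤ r ≤ 3`:
`M_{2,r} - G_2 ≥ (r/(2 max(x₁,x₂))) σ_2`. -/
theorem stmt14 (x₁ x₂ q r : ℝ) (hx₁ : 0 < x₁) (hx₂ : 0 < x₂)
    (hq1 : 0 < q) (hq2 : q < 1) (hr1 : 1 ≤ r) (hr2 : r ≤ 3)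
    (A : ℝ) (hA : A = q * x₁ + (1 - q) * x₂) :
    r / (2 * max x₁ x₂) * (q * (x₁ - A) ^ 2 + (1 - q) * (x₂ - A) ^ 2)
      ≤ (q * x₁ ^ r + (1 - q) * x₂ ^ r) ^ (1 / r) - x₁ ^ q * x₂ ^ (1 - q) := by
  have hσ : q * (x₁ - A) ^ 2 + (1 - q) * (x₂ - A) ^ 2 = q * (1 - q) * (x₁ - x₂) ^ 2 := by
    rw [hA]; ring
  rw [hσ]
  rcases le_total x₂ x₁ with h | h
  · rw [max_eq_left h]
    exact div_mul_sq_sub_le_powerMean_sub_geomMean_of_le hx₂ h hq1.le hq2.le hr1 hr2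
  · rw [max_eq_right h]
    have := div_mul_sq_sub_le_powerMean_sub_geomMean_of_le hx₁ h (sub_nonneg.2 hq2.le)
      (sub_le_self 1 hq1.le) hr1 hr2
    rw [sub_sub_cancel] at this
    convert this using 2 <;> ring_nf
end

section
/- For $2 < r \le 3$, $0 < q < 1$, and $0 < x \le 1$, the inequality $j(x,q) := q(2-q)x^{r+q-2} + (1-q)(2-q)x^{q-2} + q(r^2-1)x^r - (1-q)(r-1)(r-2) \ge 0$ holds. -/
/-!
Drop the nonnegative first term and compare the remaining powers of `x ∈ (0, 1]` with integer
ones: `x ^ (q - 2) ≥ x⁻¹` and `x ^ r ≥ x ^ 3`. Since `(r - 1)(r - 2) ≤ 2` and `r ^ 2 - 1 ≥ 3`,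
what is left is the polynomial inequality `2 (1 - q) ≤ (1 - q)(2 - q) / x + 3 q x ^ 3`. For
`x ≤ 1 - q / 2` the first summand alone suffices; otherwise `8 x ^ 3 ≥ (2 - q) ^ 3 ≥ 8 (1 - q) / 3`.
-/

lemma two_mul_one_sub_le_div_add_mul_pow_three {q x : ℝ} (hq0 : 0 ≤ q) (hq1 : q ≤ 1)
    (hx0 : 0 < x) (hx1 : x ≤ 1) :
    2 * (1 - q) ≤ (1 - q) * (2 - q) / x + 3 * q * x ^ 3 := by
  have hcube_nonneg : 0 ≤ 3 * q * x ^ 3 := by positivity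
  have hp : 0 ≤ 1 - q := by linarith
  rw [mul_div_assoc]
  rcases le_or_gt (2 * x) (2 - q) with hsmall | hlarge
  · have h : 2 ≤ (2 - q) / x := by rw [le_div_iff₀ hx0]; linarith
    nlinarith [mul_le_mul_of_nonneg_left h hp]
  · have hdiv : 2 - q ≤ (2 - q) / x := by
      rw [le_div_iff₀ hx0]; nlinarith
    have hpow : (2 - q) ^ 3 ≤ 8 * x ^ 3 := by
      nlinarith [pow_le_pow_left₀ (by linarith) hlarge.le 3]
    have hbound : 8 * (1 - q) ≤ 3 * (2 - q) ^ 3 := by nlinarith [sq_nonneg q, sq_nonneg (1 - q)]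
    nlinarith [mul_le_mul_of_nonneg_left hdiv hp]

/-- For `2 < r ≤ 3`, `0 < q < 1`, `0 < x ≤ 1`:
`j(x,q) = q(2-q)x^{r+q-2} + (1-q)(2-q)x^{q-2} + q(r²-1)x^r - (1-q)(r-1)(r-2) ≥ 0`. -/
theorem stmt15 (r q x : ℝ) (hr1 : 2 < r) (hr2 : r ≤ 3)
    (hq1 : 0 < q) (hq2 : q < 1) (hx1 : 0 < x) (hx2 : x ≤ 1) :
    0 ≤ q * (2 - q) * x ^ (r + q - 2) + (1 - q) * (2 - q) * x ^ (q - 2)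
        + q * (r ^ 2 - 1) * x ^ r - (1 - q) * (r - 1) * (r - 2) := by
  have h1q : 0 < 1 - q := by linarith
  have h2q : 0 < 2 - q := by linarith
  have hfirst : 0 ≤ q * (2 - q) * x ^ (r + q - 2) := by
    have := Real.rpow_nonneg hx1.le (r + q - 2)
    positivity
  have hinv : x⁻¹ ≤ x ^ (q - 2) := by
    rw [← Real.rpow_neg_one]
    exact Real.rpow_le_rpow_of_exponent_ge hx1 hx2 (by linarith)
  have hcube : x ^ 3 ≤ x ^ r := by
    rw [← Real.rpow_natCast]
    exact Real.rpow_le_rpow_of_exponent_ge hx1 hx2 (by norm_num; linarith)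
  have hr_lower : 3 ≤ r ^ 2 - 1 := by nlinarith
  have hr_upper : (r - 1) * (r - 2) ≤ 2 := by nlinarith
  have hcore := two_mul_one_sub_le_div_add_mul_pow_three hq1.le hq2.le hx1 hx2
  have hmain : (1 - q) * (r - 1) * (r - 2)
      ≤ (1 - q) * (2 - q) * x ^ (q - 2) + q * (r ^ 2 - 1) * x ^ r := calc
    (1 - q) * (r - 1) * (r - 2) ≤ (1 - q) * 2 := by
      rw [mul_assoc]; exact mul_le_mul_of_nonneg_left hr_upper h1q.le
    _ ≤ (1 - q) * (2 - q) * x⁻¹ + q * 3 * x ^ 3 := by rw [← div_eq_mul_inv]; linarith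
    _ ≤ (1 - q) * (2 - q) * x ^ (q - 2) + q * (r ^ 2 - 1) * x ^ r := by gcongr
  linarith
end

section
/- The lower bound analogue of the main theorem fails: for $n = 2$, $r \ge 2$, weights $q_1 = 1-q$, $q_2 = q$ with $0 < q < 1/2$, and $x_1 = 0$, $x_2 = 1$, one has $M_{2,1/r} - q^{r-1} A_2 - (1-q^{r-1}) G_2 = 0$ while $\frac{1/r - q^{r-1}}{2 x_2}\sigma_2 > 0$ whenever $q^{r-1} < 1/r$, so the inequality $M_{n,1/r} - q^{r-1}A_n - (1-q^{r-1})G_n \ge \frac{1/r - q^{r-1}}{2 x_n}\sigma_n$ does not hold in general. -/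
/-!
At `x₁ = 0` both the power mean `M_{2,1/r} = q^r` and the mean `A₂ = q` are explicit, and the
geometric mean vanishes, so `M_{2,1/r} - q^{r-1} A₂ - (1 - q^{r-1}) G₂ = q^r - q^{r-1} q = 0`.
The proposed lower bound, however, is a positive multiple of `σ₂ = q (1 - q) > 0`.
-/

lemma two_point_variance (q x y : ℝ) :
    (1 - q) * (x - ((1 - q) * x + q * y)) ^ 2 + q * (y - ((1 - q) * x + q * y)) ^ 2
      = q * (1 - q) * (y - x) ^ 2 := by
  ring

lemma power_mean_zero_one_eq (q : ℝ) {r : ℝ} (hr : r ≠ 0) :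
    ((1 - q) * (0 : ℝ) ^ (1 / r) + q * (1 : ℝ) ^ (1 / r)) ^ r = q ^ r := by
  rw [Real.zero_rpow (one_div_ne_zero hr), Real.one_rpow]
  ring_nf

lemma geom_mean_zero_one_eq_zero {q : ℝ} (hq : q ≠ 1) : (0 : ℝ) ^ (1 - q) * (1 : ℝ) ^ q = 0 := by
  rw [Real.zero_rpow (sub_ne_zero.mpr hq.symm), zero_mul]

theorem stmt19_general (r q : ℝ) (hq1 : 0 < q) (hq2 : q < 1 / 2)
    (hqr : q ^ (r - 1) < 1 / r)
    (A : ℝ) (hA : A = (1 - q) * 0 + q * 1)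
    (σ : ℝ) (hσ : σ = (1 - q) * (0 - A) ^ 2 + q * (1 - A) ^ 2) :
    ((1 - q) * (0 : ℝ) ^ (1 / r) + q * (1 : ℝ) ^ (1 / r)) ^ r
        - q ^ (r - 1) * A - (1 - q ^ (r - 1)) * ((0 : ℝ) ^ (1 - q) * (1 : ℝ) ^ q) = 0
      ∧ 0 < (1 / r - q ^ (r - 1)) / (2 * 1) * σ
      ∧ ¬ ((1 / r - q ^ (r - 1)) / (2 * 1) * σ
            ≤ ((1 - q) * (0 : ℝ) ^ (1 / r) + q * (1 : ℝ) ^ (1 / r)) ^ r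
                - q ^ (r - 1) * A
                - (1 - q ^ (r - 1)) * ((0 : ℝ) ^ (1 - q) * (1 : ℝ) ^ q)) := by
  have hr : 0 < r := one_div_pos.mp ((Real.rpow_pos_of_pos hq1 _).trans hqr)
  have hA' : A = q := by rw [hA]; ring
  have gap : ((1 - q) * (0 : ℝ) ^ (1 / r) + q * (1 : ℝ) ^ (1 / r)) ^ r
      - q ^ (r - 1) * A - (1 - q ^ (r - 1)) * ((0 : ℝ) ^ (1 - q) * (1 : ℝ) ^ q) = 0 := by
    rw [power_mean_zero_one_eq q hr.ne', geom_mean_zero_one_eq_zero (by linarith), hA',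
      Real.rpow_sub_one hq1.ne']
    field_simp
    ring
  have hσ_pos : 0 < σ := by
    rw [hσ, hA, two_point_variance]
    have : 0 < 1 - q := by linarith
    positivity
  have bound_pos : 0 < (1 / r - q ^ (r - 1)) / (2 * 1) * σ :=
    mul_pos (div_pos (sub_pos.mpr hqr) (by norm_num)) hσ_pos
  exact ⟨gap, bound_pos, by rw [gap]; exact not_le.mpr bound_pos⟩

/-- The lower-bound analogue fails: for `n = 2`, `x₁ = 0`, `x₂ = 1`, weights `(1-q, q)`
with `0 < q < 1/2` and `r ≥ 2` with `q^{r-1} < 1/r`, the left-hand side is `0`,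
the right-hand side is positive, so
`M_{2,1/r} - q^{r-1} A₂ - (1-q^{r-1}) G₂ ≥ ((1/r - q^{r-1})/(2 x₂)) σ₂` fails. -/
theorem stmt19 (r q : ℝ) (hr : 2 ≤ r) (hq1 : 0 < q) (hq2 : q < 1 / 2)
    (hqr : q ^ (r - 1) < 1 / r)
    (A : ℝ) (hA : A = (1 - q) * 0 + q * 1)
    (σ : ℝ) (hσ : σ = (1 - q) * (0 - A) ^ 2 + q * (1 - A) ^ 2) :
    ((1 - q) * (0 : ℝ) ^ (1 / r) + q * (1 : ℝ) ^ (1 / r)) ^ r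
        - q ^ (r - 1) * A - (1 - q ^ (r - 1)) * ((0 : ℝ) ^ (1 - q) * (1 : ℝ) ^ q) = 0
      ∧ 0 < (1 / r - q ^ (r - 1)) / (2 * 1) * σ
      ∧ ¬ ((1 / r - q ^ (r - 1)) / (2 * 1) * σ
            ≤ ((1 - q) * (0 : ℝ) ^ (1 / r) + q * (1 : ℝ) ^ (1 / r)) ^ r
                - q ^ (r - 1) * A
                - (1 - q ^ (r - 1)) * ((0 : ℝ) ^ (1 - q) * (1 : ℝ) ^ q)) :=
  stmt19_general r q hq1 hq2 hqr A hA σ hσ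
end
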